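/- arXiv:2602.09603 — 7 statements merged into one kernel-verified Lean document; each statement's English description precedes it below -/
import Mathlib

section
/- For natural numbers N, p, q with N ≥ p ≥ q ≥ 0, one has ((p - q + 1)/(p + 1)) * C(N, p) * C(N+1, q) = C(N, p) * C(N, q) - C(N, p+1) * C(N, q-1), where C(n, k) denotes the binomial coefficient. -/
/-- For `N ≥ p ≥ q ≥ 0`,
`((p - q + 1)/(p + 1)) * C(N, p) * C(N+1, q) = C(N, p) * C(N, q) - C(N, p+1) * C(N, q-1)`,
with the convention `C(N, q-1) = 0` when `q = 0`. Stated over `ℚ`. -/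
theorem stmt0 (N p q : ℕ) (hq : q ≤ p) (hp : p ≤ N) :
    ((p : ℚ) - q + 1) / (p + 1) * (N.choose p) * ((N + 1).choose q) =
      (N.choose p : ℚ) * (N.choose q) -
        (N.choose (p + 1) : ℚ) * (if q = 0 then 0 else (N.choose (q - 1) : ℚ)) := by
  have hp1 : ((p : ℚ) + 1) ≠ 0 := by positivity
  rcases Nat.eq_zero_or_pos q with hq0 | hq1
  · subst hq0
    simp only [if_pos rfl, ↓reduceIte, Nat.choose_zero_right, Nat.cast_one, mul_zero, sub_zero,
      Nat.cast_zero]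
    field_simp
  · have hq0 : q ≠ 0 := hq1.ne'
    rw [if_neg hq0]
    set a : ℚ := (N.choose p : ℚ)
    set a' : ℚ := (N.choose (p + 1) : ℚ)
    set b : ℚ := (N.choose q : ℚ)
    set b' : ℚ := (N.choose (q - 1) : ℚ)
    set c : ℚ := ((N + 1).choose q : ℚ)
    have hq1' : q - 1 + 1 = q := Nat.succ_pred_eq_of_pos hq1
    -- R1 : a' * (p+1) = a * (N - p)
    have h1 : a' * ((p : ℚ) + 1) = a * ((N : ℚ) - p) := by
      have := Nat.choose_succ_right_eq N p
      have : (↑(N.choose (p + 1) * (p + 1)) : ℚ) = ↑(N.choose p * (N - p)) := by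
        exact_mod_cast congrArg (Nat.cast (R := ℚ)) this
      push_cast [Nat.cast_sub hp] at this
      simpa [a, a'] using this
    -- R2 : b * q = b' * (N - q + 1)
    have h2 : b * (q : ℚ) = b' * ((N : ℚ) - q + 1) := by
      have h := Nat.choose_succ_right_eq N (q - 1)
      simp only [Nat.succ_eq_add_one, hq1'] at h
      have h' : (↑(N.choose q * q) : ℚ) = ↑(N.choose (q - 1) * (N - (q - 1))) := by
        exact_mod_cast congrArg (Nat.cast (R := ℚ)) h
      have hqN : q - 1 ≤ N := le_trans (Nat.pred_le q) (le_trans hq hp)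
      push_cast [Nat.cast_sub hqN, Nat.cast_sub (Nat.one_le_iff_ne_zero.mpr hq0)] at h'
      have : b * (q : ℚ) = b' * ((N : ℚ) - ((q : ℚ) - 1)) := by simpa [a, b, b'] using h'
      linarith [this]
    -- R3 : (N+1) * b' = c * q
    have h3 : ((N : ℚ) + 1) * b' = c * (q : ℚ) := by
      have h := Nat.add_one_mul_choose_eq N (q - 1)
      simp only [Nat.succ_eq_add_one, hq1'] at h
      have h' : (↑(Nat.succ N * N.choose (q - 1)) : ℚ) = ↑((N + 1).choose q * q) := by
        exact_mod_cast congrArg (Nat.cast (R := ℚ)) h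
      push_cast at h'
      simpa [b', c] using h'
    have hqQ : (q : ℚ) ≠ 0 := by exact_mod_cast hq0
    have hx : ((N : ℚ) - q + 1) ≠ 0 := by
      have : (q : ℚ) ≤ N := by exact_mod_cast le_trans hq hp
      nlinarith
    have key : ((p : ℚ) - q + 1) * a * c * ((q : ℚ) * ((N : ℚ) - q + 1)) =
        ((p : ℚ) + 1) * (a * b - a' * b') * ((q : ℚ) * ((N : ℚ) - q + 1)) := by
      linear_combination (b' * (q : ℚ) * ((N : ℚ) - q + 1)) * h1
        + (-((p : ℚ) - q + 1) * ((N : ℚ) + 1) * a - a * ((N : ℚ) - p) * q) * h2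
        + (-((p : ℚ) - q + 1) * a * ((N : ℚ) - q + 1)) * h3
    have key2 : ((p : ℚ) - q + 1) * a * c = ((p : ℚ) + 1) * (a * b - a' * b') := by
      have hne : (q : ℚ) * ((N : ℚ) - q + 1) ≠ 0 := mul_ne_zero hqQ hx
      exact mul_right_cancel₀ hne key
    field_simp
    linarith [key2]
end

section
/- Let A be an associative algebra over a field of characteristic zero, E a linear subspace of A, and suppose [[x,y],z] = 0 and x^3 = 0 for all x, y, z ∈ E. Then x*y*x = 0 for all x, y ∈ E. -/
/-- Let `A` be an associative algebra over a field of characteristic zero, `E` a linear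
subspace of `A` with `[[x,y],z] = 0` and `x^3 = 0` for all `x, y, z ∈ E`. Then
`x*y*x = 0` for all `x, y ∈ E`. -/
theorem stmt6 (K A : Type*) [Field K] [CharZero K] [Ring A] [Algebra K A]
    (E : Submodule K A)
    (h1 : ∀ x ∈ E, ∀ y ∈ E, ∀ z ∈ E, (x * y - y * x) * z - z * (x * y - y * x) = 0)
    (h2 : ∀ x ∈ E, x ^ 3 = 0) :
    ∀ x ∈ E, ∀ y ∈ E, x * y * x = 0 := by
  intro x hx y hy
  have e1 : (x + y) ^ 3 = 0 := h2 _ (E.add_mem hx hy)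
  have e2 : (x - y) ^ 3 = 0 := h2 _ (E.sub_mem hx hy)
  have e4 : y ^ 3 = 0 := h2 y hy
  have hcomm := h1 x hx y hy x hx
  have key : 6 * (x * y * x) =
      2 * ((x * y - y * x) * x - x * (x * y - y * x))
        + ((x + y) ^ 3 - (x - y) ^ 3 - 2 * y ^ 3) := by
    noncomm_ring
  rw [hcomm, e1, e2, e4] at key
  simp only [mul_zero, sub_zero, zero_sub, zero_add, add_zero, neg_zero] at key
  have h6 : (6 : K) • (x * y * x) = 0 := by
    rw [Algebra.smul_def]
    have : (algebraMap K A) (6 : K) = (6 : A) := by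
      simp [map_ofNat]
    rw [this, key]
  calc x * y * x = ((6 : K)⁻¹ * 6) • (x * y * x) := by norm_num
    _ = (6 : K)⁻¹ • ((6 : K) • (x * y * x)) := by rw [smul_smul]
    _ = 0 := by rw [h6, smul_zero]
end

section
/- Let C be the Clifford algebra of a quadratic form Q over a field K of characteristic zero with x*y + y*x = 2 B(x,y) for x,y ∈ E, let n ≥ 1, and in the n-fold tensor product algebra C^{⊗n} define ψ_n(x) = (1/n) ∑_{i=1}^{n} 1^{⊗(i-1)} ⊗ x ⊗ 1^{⊗(n-i)} for x ∈ E. Then for all x, y, z ∈ E: [[ψ_n(x), ψ_n(y)], ψ_n(z)] = (4/n²)·(B(y,z)·ψ_n(x) − B(x,z)·ψ_n(y)). -/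
open CliffordAlgebra PiTensorProduct

section
variable (K : Type*) {V : Type*} [Field K] [CharZero K]
    [AddCommGroup V] [Module K V] (Q : QuadraticForm K V) (n : ℕ)

noncomputable def bb (i : Fin n) : CliffordAlgebra Q →ₗ[K] PiTensorProduct K (fun _ : Fin n => CliffordAlgebra Q) :=
  (tprod K (s := fun _ : Fin n => CliffordAlgebra Q)).toLinearMap (fun _ => 1) i

lemma bb_apply (i : Fin n) (c : CliffordAlgebra Q) :
    bb K Q n i c = tprod K (fun j => if j = i then c else 1) := by
  simp only [bb, MultilinearMap.toLinearMap_apply]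
  congr 1
  funext j
  simp [Function.update_apply]

lemma bb_mul (i : Fin n) (c d : CliffordAlgebra Q) :
    bb K Q n i c * bb K Q n i d = bb K Q n i (c * d) := by
  simp only [bb_apply, tprod_mul_tprod]
  congr 1; funext j; by_cases h : j = i <;> simp [h]

lemma bb_comm (i j : Fin n) (h : i ≠ j) (c d : CliffordAlgebra Q) :
    bb K Q n i c * bb K Q n j d = bb K Q n j d * bb K Q n i c := by
  simp only [bb_apply, tprod_mul_tprod]
  congr 1; funext k
  by_cases h1 : k = i <;> by_cases h2 : k = j <;> simp_all

end
section
variable {K V : Type*} [Field K] [CharZero K]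
    [AddCommGroup V] [Module K V] (Q : QuadraticForm K V)

lemma cliff_key (x y z : V) :
    (ι Q x * ι Q y - ι Q y * ι Q x) * ι Q z - ι Q z * (ι Q x * ι Q y - ι Q y * ι Q x)
      = (2 * QuadraticMap.polar Q y z) • ι Q x - (2 * QuadraticMap.polar Q x z) • ι Q y := by
  have h1 := CliffordAlgebra.ι_mul_ι_add_swap (Q := Q) y z
  have h2 := CliffordAlgebra.ι_mul_ι_add_swap (Q := Q) x z
  set a := ι Q x; set b := ι Q y; set c := ι Q z
  have e : (a * b - b * a) * c - c * (a * b - b * a)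
      = a * (b * c + c * b) - (a * c + c * a) * b - (b * (a * c + c * a) - (b * c + c * b) * a) := by
    noncomm_ring
  rw [e, h1, h2, Algebra.smul_def, Algebra.smul_def, _root_.map_mul, _root_.map_mul,
    ← Algebra.commutes (QuadraticMap.polar Q y z) a, ← Algebra.commutes (QuadraticMap.polar Q x z) b]
  have c2 : (algebraMap K (CliffordAlgebra Q)) 2 = 2 := map_ofNat _ 2
  rw [c2]
  noncomm_ring
end

open CliffordAlgebra PiTensorProduct in
/-- In the `n`-fold tensor power of the Clifford algebra of `Q` over a field of
characteristic zero, the elements `ψ_n(v) = (1/n) ∑ᵢ 1 ⊗ ⋯ ⊗ v ⊗ ⋯ ⊗ 1` satisfy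
`[[ψ_n x, ψ_n y], ψ_n z] = (4/n²) (B(y,z) ψ_n x − B(x,z) ψ_n y)`
where `B(a,b) = (Q(a+b) − Q a − Q b)/2`. -/
theorem stmt9 (K V : Type*) [Field K] [CharZero K]
    [AddCommGroup V] [Module K V] (Q : QuadraticForm K V) (n : ℕ) (hn : 1 ≤ n)
    (x y z : V) :
    let ψ : V → PiTensorProduct K (fun _ : Fin n => CliffordAlgebra Q) := fun v =>
      (n : K)⁻¹ • ∑ i : Fin n, tprod K (fun j => if j = i then ι Q v else 1)
    (ψ x * ψ y - ψ y * ψ x) * ψ z - ψ z * (ψ x * ψ y - ψ y * ψ x) =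
      (4 / (n : K) ^ 2) •
        (((Q (y + z) - Q y - Q z) / 2) • ψ x - ((Q (x + z) - Q x - Q z) / 2) • ψ y) := by
  intro ψ
  have hn0 : (n : K) ≠ 0 := Nat.cast_ne_zero.2 (by omega)
  set s : K := (n : K)⁻¹ with hs
  have hψ : ∀ v, ψ v = s • ∑ i : Fin n, bb K Q n i (ι Q v) := by
    intro v; simp only [ψ, bb_apply]; rfl
  have key : ∀ c d : CliffordAlgebra Q,
      (∑ i : Fin n, bb K Q n i c) * (∑ i : Fin n, bb K Q n i d)
        - (∑ i : Fin n, bb K Q n i d) * (∑ i : Fin n, bb K Q n i c)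
      = ∑ i : Fin n, bb K Q n i (c * d - d * c) := by
    intro c d
    rw [Finset.sum_mul_sum, Finset.sum_mul_sum,
      Finset.sum_comm (s := Finset.univ) (t := Finset.univ)
        (f := fun i j => bb K Q n i d * bb K Q n j c),
      ← Finset.sum_sub_distrib]
    refine Finset.sum_congr rfl fun i _ => ?_
    rw [← Finset.sum_sub_distrib, Finset.sum_eq_single i]
    · rw [bb_mul, bb_mul, ← map_sub]
    · intro j _ hj
      rw [bb_comm K Q n i j (Ne.symm hj), sub_self]
    · simp
  have h1 : ψ x * ψ y - ψ y * ψ x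
      = (s * s) • ∑ i : Fin n, bb K Q n i (ι Q x * ι Q y - ι Q y * ι Q x) := by
    rw [hψ x, hψ y, smul_mul_smul_comm, smul_mul_smul_comm, ← smul_sub, key]
  have h2 : (ψ x * ψ y - ψ y * ψ x) * ψ z - ψ z * (ψ x * ψ y - ψ y * ψ x)
      = (s * s * s) • ∑ i : Fin n, bb K Q n i
          ((ι Q x * ι Q y - ι Q y * ι Q x) * ι Q z
            - ι Q z * (ι Q x * ι Q y - ι Q y * ι Q x)) := by
    rw [h1, hψ z, smul_mul_smul_comm, smul_mul_smul_comm, mul_comm s (s * s), ← smul_sub, key]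
  rw [h2]
  have h3 : ∀ i : Fin n, bb K Q n i
        ((ι Q x * ι Q y - ι Q y * ι Q x) * ι Q z - ι Q z * (ι Q x * ι Q y - ι Q y * ι Q x))
      = (2 * QuadraticMap.polar Q y z) • bb K Q n i (ι Q x)
        - (2 * QuadraticMap.polar Q x z) • bb K Q n i (ι Q y) := by
    intro i
    rw [cliff_key, map_sub, map_smul, map_smul]
  simp only [h3, hψ]
  have py : QuadraticMap.polar Q y z = Q (y + z) - Q y - Q z := rfl
  have px : QuadraticMap.polar Q x z = Q (x + z) - Q x - Q z := rfl
  rw [Finset.sum_sub_distrib, ← Finset.smul_sum, ← Finset.smul_sum, ← py, ← px]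
  have hsc : (n : K) ^ 2 * ((n : K)⁻¹) ^ 3 = (n : K)⁻¹ := by
    field_simp
  match_scalars <;> rw [hs] <;> field_simp <;> ring
end

section
/- Let A be a commutative ring, and let a₁, …, a_n ∈ A be pairwise commuting elements of an associative algebra with aᵢ² = c for all i, where c is central. Set X = a₁ + ⋯ + a_n. If n = 2p+1 is odd, then ∏_{q=0}^{p} (X² − (2q+1)²·c) = 0; if n = 2p+2 is even, then X·∏_{q=0}^{p} (X² − (2q+2)²·c) = 0. -/
namespace Stmt12Aux

variable {R : Type*} [Ring R]

/-- Product of linear factors `x + (2t - n)•u`, `t = 0..n`. -/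
def Lf (n : ℕ) (x u : R) : R :=
  ((List.range (n + 1)).map fun t : ℕ => x + (2 * (t : ℤ) - (n : ℤ)) • u).prod

/-- The minimal-type polynomial evaluated at `x`. -/
def Ff (n : ℕ) (x c : R) : R :=
  if n % 2 = 1 then
    ((List.range (n / 2 + 1)).map fun q => x ^ 2 - ((2 * q + 1) ^ 2 : ℕ) • c).prod
  else
    x * ((List.range (n / 2)).map fun q => x ^ 2 - ((2 * q + 2) ^ 2 : ℕ) • c).prod

lemma Ff_odd {n : ℕ} (h : n % 2 = 1) (x c : R) :
    Ff n x c =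
      ((List.range (n / 2 + 1)).map fun q => x ^ 2 - ((2 * q + 1) ^ 2 : ℕ) • c).prod := by
  rw [Ff, if_pos h]

lemma Ff_even {n : ℕ} (h : n % 2 = 0) (x c : R) :
    Ff n x c =
      x * ((List.range (n / 2)).map fun q => x ^ 2 - ((2 * q + 2) ^ 2 : ℕ) • c).prod := by
  rw [Ff, if_neg (by omega)]

lemma Ff_step (hR : ∀ x y : R, x * y = y * x) (n : ℕ) (x c : R) :
    Ff (n + 2) x c = Ff n x c * (x ^ 2 - ((n + 2) ^ 2 : ℕ) • c) := by
  letI : CommRing R := { ‹Ring R› with mul_comm := hR }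
  obtain ⟨k, rfl | rfl⟩ : ∃ k, n = 2 * k ∨ n = 2 * k + 1 := ⟨n / 2, by omega⟩
  · rw [Ff_even (by omega), Ff_even (by omega),
      show (2 * k + 2) / 2 = k + 1 by omega, show (2 * k) / 2 = k by omega,
      List.range_succ, List.map_append, List.prod_append]
    simp only [List.map_cons, List.map_nil, List.prod_cons, List.prod_nil]
    ring
  · rw [Ff_odd (by omega), Ff_odd (by omega),
      show (2 * k + 1 + 2) / 2 = k + 1 by omega, show (2 * k + 1) / 2 = k by omega,
      List.range_succ, List.map_append, List.prod_append]
    simp only [List.map_cons, List.map_nil, List.prod_cons, List.prod_nil]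
    have : 2 * (k + 1) + 1 = 2 * k + 1 + 2 := by ring
    rw [this]
    ring

lemma Lf_step (hR : ∀ x y : R, x * y = y * x) (n : ℕ) (x u : R) :
    Lf (n + 2) x u =
      (x - ((n : ℤ) + 2) • u) * Lf n x u * (x + ((n : ℤ) + 2) • u) := by
  letI : CommRing R := { ‹Ring R› with mul_comm := hR }
  unfold Lf
  rw [List.range_succ_eq_map, List.map_cons, List.prod_cons, List.map_map,
    List.range_succ, List.map_append, List.prod_append]
  have h0 : x + (2 * ((0 : ℕ) : ℤ) - ((n : ℕ) + 2 : ℕ)) • u = x - ((n : ℤ) + 2) • u := by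
    push_cast
    module
  have hlast : ((fun t : ℕ => x + (2 * (t : ℤ) - ((n : ℕ) + 2 : ℕ)) • u) ∘ Nat.succ) (n + 1)
      = x + ((n : ℤ) + 2) • u := by
    simp only [Function.comp]
    push_cast
    module
  have hfun : ∀ t ∈ List.range (n + 1),
      ((fun t : ℕ => x + (2 * (t : ℤ) - ((n : ℕ) + 2 : ℕ)) • u) ∘ Nat.succ) t
        = x + (2 * (t : ℤ) - (n : ℤ)) • u := by
    intro t _
    simp only [Function.comp]
    push_cast
    module
  rw [List.map_congr_left hfun]
  simp only [List.map_cons, List.map_nil, List.prod_cons, List.prod_nil, hlast]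
  rw [h0]
  ring

lemma Lf_eq_Ff (hR : ∀ x y : R, x * y = y * x) {u c : R} (hu : u ^ 2 = c) :
    ∀ (n : ℕ) (x : R), Lf n x u = Ff n x c := by
  letI : CommRing R := { ‹Ring R› with mul_comm := hR }
  intro n
  induction n using Nat.twoStepInduction with
  | zero =>
    intro x
    rw [Ff_even rfl]
    simp [Lf, show List.range 1 = [0] from rfl]
  | one =>
    intro x
    rw [Ff_odd rfl]
    have hL : Lf 1 x u = (x - u) * (x + u) := by
      unfold Lf
      rw [show List.range 2 = [0, 1] from rfl]
      simp only [List.map_append, List.map_cons, List.map_nil, List.prod_append,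
        List.prod_cons, List.prod_nil]
      push_cast
      simp only [one_smul, neg_smul]
      ring
    rw [hL, show (1 : ℕ) / 2 + 1 = 1 from rfl, show List.range 1 = [0] from rfl]
    simp only [List.map_cons, List.map_nil, List.prod_cons, List.prod_nil, mul_one]
    rw [show (x - u) * (x + u) = x ^ 2 - u ^ 2 from by ring, hu]
    norm_num
  | more n ih _ =>
    intro x
    rw [Lf_step hR, Ff_step hR, ih]
    have h1 : (x - ((n : ℤ) + 2) • u) * (x + ((n : ℤ) + 2) • u)
        = x ^ 2 - (((n : ℤ) + 2) ^ 2) • u ^ 2 := by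
      have : (((n : ℤ) + 2) • u) * (((n : ℤ) + 2) • u) = (((n : ℤ) + 2) ^ 2) • u ^ 2 := by
        rw [smul_mul_smul_comm, ← pow_two, ← pow_two]
      calc (x - ((n : ℤ) + 2) • u) * (x + ((n : ℤ) + 2) • u)
          = x ^ 2 - (((n : ℤ) + 2) • u) * (((n : ℤ) + 2) • u) := by ring
        _ = x ^ 2 - (((n : ℤ) + 2) ^ 2) • u ^ 2 := by rw [this]
    have h2 : (((n : ℤ) + 2) ^ 2) • u ^ 2 = ((n + 2) ^ 2 : ℕ) • c := by
      rw [hu, show ((n : ℤ) + 2) ^ 2 = (((n + 2) ^ 2 : ℕ) : ℤ) by push_cast; ring,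
        natCast_zsmul]
    calc (x - ((n : ℤ) + 2) • u) * Ff n x c * (x + ((n : ℤ) + 2) • u)
        = Ff n x c * ((x - ((n : ℤ) + 2) • u) * (x + ((n : ℤ) + 2) • u)) := by ring
      _ = Ff n x c * (x ^ 2 - ((n + 2) ^ 2 : ℕ) • c) := by rw [h1, h2]

lemma Lf_succ (n : ℕ) (y u : R) :
    Lf (n + 1) (y + u) u = Lf n y u * (y + ((n : ℤ) + 2) • u) := by
  unfold Lf
  rw [List.range_succ, List.map_append, List.prod_append]
  have hfun : ∀ t ∈ List.range (n + 1),
      (fun t : ℕ => y + u + (2 * (t : ℤ) - ((n : ℕ) + 1 : ℕ)) • u) t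
        = y + (2 * (t : ℤ) - (n : ℤ)) • u := by
    intro t _
    push_cast
    module
  have hlast : y + u + (2 * ((n + 1 : ℕ) : ℤ) - ((n : ℕ) + 1 : ℕ)) • u
      = y + ((n : ℤ) + 2) • u := by
    push_cast
    module
  rw [List.map_congr_left hfun]
  simp only [List.map_cons, List.map_nil, List.prod_cons, List.prod_nil, mul_one]
  rw [hlast]

lemma main (hR : ∀ x y : R, x * y = y * x) (c : R) :
    ∀ (n : ℕ) (a : Fin n → R), (∀ i, a i ^ 2 = c) →
    Ff n (∑ i, a i) c = 0 := by
  intro n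
  induction n with
  | zero =>
    intro a ha
    simp [Ff]
  | succ n ih =>
    intro a ha
    have hw : a (Fin.last n) ^ 2 = c := ha _
    rw [Fin.sum_univ_castSucc, ← Lf_eq_Ff hR hw, Lf_succ, Lf_eq_Ff hR hw,
      ih (fun i => a i.castSucc) (fun i => ha _), zero_mul]

end Stmt12Aux

/-- Let `a₁, …, a_n` be pairwise commuting elements of an associative ring with
`aᵢ² = c` for all `i`, `c` central, and `X = a₁ + ⋯ + a_n`. If `n = 2p+1` then
`∏_{q=0}^{p} (X² − (2q+1)² c) = 0`; if `n = 2p+2` then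
`X ∏_{q=0}^{p} (X² − (2q+2)² c) = 0`. -/
theorem stmt12 (A : Type*) [Ring A] (n p : ℕ) (a : Fin n → A) (c : A)
    (hc : ∀ b : A, Commute c b)
    (hcomm : ∀ i j : Fin n, Commute (a i) (a j))
    (hsq : ∀ i : Fin n, a i ^ 2 = c) :
    (n = 2 * p + 1 →
      ((List.range (p + 1)).map
        (fun q => (∑ i : Fin n, a i) ^ 2 - ((2 * q + 1) ^ 2 : ℕ) • c)).prod = 0) ∧
    (n = 2 * p + 2 →
      (∑ i : Fin n, a i) *
        ((List.range (p + 1)).map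
          (fun q => (∑ i : Fin n, a i) ^ 2 - ((2 * q + 2) ^ 2 : ℕ) • c)).prod = 0) := by
  have hcomm' : ∀ x ∈ Set.range a ∪ {c}, ∀ y ∈ Set.range a ∪ {c}, x * y = y * x := by
    rintro x (⟨i, rfl⟩ | rfl) y hy
    · rcases hy with ⟨j, rfl⟩ | rfl
      · exact hcomm i j
      · exact (hc (a i)).symm
    · exact hc y
  set S := Subring.closure (Set.range a ∪ {c}) with hS
  have hle := Subring.closure_le_centralizer_centralizer (Set.range a ∪ {c})
  have hR : ∀ x y : S, x * y = y * x := fun x y =>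
    Subtype.ext <| Set.centralizer_centralizer_comm_of_comm hcomm' _ (hle x.2) _ (hle y.2)
  let φ : S →+* A := S.subtype
  let a' : Fin n → S := fun i => ⟨a i, Subring.subset_closure (Or.inl ⟨i, rfl⟩)⟩
  let c' : S := ⟨c, Subring.subset_closure (Or.inr rfl)⟩
  have ha' : ∀ i, a' i ^ 2 = c' := by
    intro i
    apply Subtype.ext
    rw [SubmonoidClass.coe_pow]
    exact hsq i
  have key := Stmt12Aux.main hR c' n a' ha'
  have hX : φ (∑ i, a' i) = ∑ i, a i := by
    rw [map_sum]
    rfl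
  constructor
  · intro hn
    have h1 : n % 2 = 1 := by omega
    have h2 : n / 2 = p := by omega
    rw [Stmt12Aux.Ff_odd h1, h2] at key
    have h := congrArg φ key
    rw [map_list_prod, List.map_map, map_zero] at h
    rw [List.map_congr_left
        (g := fun q => (∑ i : Fin n, a i) ^ 2 - ((2 * q + 1) ^ 2 : ℕ) • c)
        (fun q _ => by
          simp only [Function.comp_apply, map_sub, map_pow, map_nsmul, hX]
          rfl)] at h
    exact h
  · intro hn
    have h1 : n % 2 = 0 := by omega
    have h2 : n / 2 = p + 1 := by omega
    rw [Stmt12Aux.Ff_even h1, h2] at key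
    have h := congrArg φ key
    rw [map_mul, map_list_prod, List.map_map, map_zero, hX] at h
    rw [List.map_congr_left
        (g := fun q => (∑ i : Fin n, a i) ^ 2 - ((2 * q + 2) ^ 2 : ℕ) • c)
        (fun q _ => by
          simp only [Function.comp_apply, map_sub, map_pow, map_nsmul, hX]
          rfl)] at h
    exact h
end

section
/- Let R be a commutative ring, d ∈ R, and a₁, …, a_n pairwise commuting elements of an associative R-algebra with (aᵢ − d)(aᵢ + d) = 0 for each i and d central. Then X = a₁ + ⋯ + a_n satisfies ∏_{k=0}^{n} (X − (n − 2k)·d) = 0. -/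
section CommKey
variable {B : Type*} [CommRing B]

/-- The product `∏_{k=0}^{n} (Y - (n - 2k) d)` in a commutative ring. -/
private def QQ (d : B) (n : ℕ) (Y : B) : B :=
  ((List.range (n + 1)).map (fun k : ℕ => Y - (((n : ℤ) - 2 * (k : ℤ) : ℤ) : B) * d)).prod

private lemma QQ_zero (d : B) (Y : B) : QQ d 0 Y = Y := by
  simp [QQ, List.range_succ]

private lemma QQ_one (d : B) (Y : B) : QQ d 1 Y = (Y - d) * (Y + d) := by
  simp [QQ, List.range_succ]
  ring

private lemma QQ_succ_succ (d : B) (n : ℕ) (Y : B) :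
    QQ d (n + 2) Y = (Y - ((n : B) + 2) * d) * QQ d n Y * (Y + ((n : B) + 2) * d) := by
  unfold QQ
  rw [List.range_succ_eq_map, List.range_succ]
  simp only [List.map_cons, List.map_append, List.map_map, List.prod_cons,
    List.prod_append, Function.comp]
  have hfun : ((fun k : ℕ =>
      Y - ((((n + 2 : ℕ) : ℤ) - 2 * (k : ℤ) : ℤ) : B) * d) ∘ Nat.succ)
        = fun k : ℕ => Y - ((((n : ℕ) : ℤ) - 2 * (k : ℤ) : ℤ) : B) * d := by
    funext k
    simp only [Function.comp]
    push_cast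
    ring_nf
  rw [hfun]
  simp only [List.map_nil, List.prod_nil, mul_one]
  have e1 : ((((n + 2 : ℕ) : ℤ) - 2 * ((0 : ℕ) : ℤ) : ℤ) : B) = (n : B) + 2 := by
    push_cast; ring
  have e2 : ((((n + 2 : ℕ) : ℤ) - 2 * ((Nat.succ (n + 1) : ℕ) : ℤ) : ℤ) : B)
      = -((n : B) + 2) := by
    push_cast; ring
  rw [e1, e2]
  ring

private lemma key (d b : B) (hb : b * b = d * d) :
    ∀ n : ℕ, ∀ Y : B, QQ d (n + 1) (Y + b) = (Y + ((n : B) + 2) * b) * QQ d n Y := by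
  intro n
  induction n using Nat.twoStepInduction with
  | zero =>
    intro Y
    rw [QQ_one, QQ_zero]
    push_cast
    linear_combination hb
  | one =>
    intro Y
    rw [show (1 : ℕ) + 1 = 0 + 2 from rfl, QQ_succ_succ, QQ_zero, QQ_one]
    push_cast
    linear_combination (3 * Y + b) * hb
  | more n ih _ =>
    intro Y
    rw [show n + 2 + 1 = (n + 1) + 2 from rfl, QQ_succ_succ d (n + 1), ih,
      QQ_succ_succ d n]
    push_cast
    linear_combination ((2 * (n : B) + 5) * Y + ((n : B) + 2) * b) * QQ d n Y * hb

private lemma comm_main : ∀ (n : ℕ) (d : B) (a : Fin n → B),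
    (∀ i, a i * a i = d * d) → QQ d n (∑ i, a i) = 0 := by
  intro n
  induction n with
  | zero =>
    intro d a _
    rw [QQ_zero]
    simp
  | succ n ih =>
    intro d a ha
    rw [Fin.sum_univ_castSucc, key d (a (Fin.last n)) (ha (Fin.last n)) n,
      ih d (fun i => a i.castSucc) (fun i => ha i.castSucc), mul_zero]

private lemma listcast (n : ℕ) :
    (do let a ← List.range (n + 1); pure ((a : ℕ) : ℤ))
      = (List.range (n + 1)).map (fun k : ℕ => (k : ℤ)) := by
  simp only [List.bind_eq_flatMap, List.pure_def]
  induction (List.range (n + 1)) with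
  | nil => rfl
  | cons x l ih => simp_all

end CommKey

/-- Let `R` be a commutative ring, `d ∈ R`, and `a₁, …, a_n` pairwise commuting elements
of an associative `R`-algebra with `(aᵢ − d)(aᵢ + d) = 0` for each `i`. Then
`X = a₁ + ⋯ + a_n` satisfies `∏_{k=0}^{n} (X − (n − 2k) d) = 0`. -/
theorem stmt13 (R A : Type*) [CommRing R] [Ring A] [Algebra R A]
    (n : ℕ) (d : R) (a : Fin n → A)
    (hcomm : ∀ i j : Fin n, Commute (a i) (a j))
    (h : ∀ i : Fin n, (a i - algebraMap R A d) * (a i + algebraMap R A d) = 0) :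
    ((List.range (n + 1)).map
      (fun k => (∑ i : Fin n, a i) - ((n : ℤ) - 2 * k) • algebraMap R A d)).prod = 0 := by
  set D := algebraMap R A d with hD
  rw [listcast n, List.map_map]
  have hset : ∀ x ∈ (Set.range a ∪ {D} : Set A), ∀ y ∈ (Set.range a ∪ {D} : Set A),
      x * y = y * x := by
    rintro x (⟨i, rfl⟩ | rfl) y (⟨j, rfl⟩ | rfl)
    · exact hcomm i j
    · exact (Algebra.commutes d (a i)).symm
    · exact Algebra.commutes d (a j)
    · rfl
  set S := Subring.closure (Set.range a ∪ {D}) with hS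
  letI : CommRing S := Subring.closureCommRingOfComm hset
  have haS : ∀ i, a i ∈ S := fun i => Subring.subset_closure (Or.inl ⟨i, rfl⟩)
  have hdS : D ∈ S := Subring.subset_closure (Or.inr rfl)
  set a' : Fin n → S := fun i => ⟨a i, haS i⟩ with ha'
  set d' : S := ⟨D, hdS⟩ with hd'
  have hsq : ∀ i, a i * a i = D * D := by
    intro i
    have hc : D * a i = a i * D := Algebra.commutes d (a i)
    have e : (a i - D) * (a i + D) = a i * a i - D * D := by
      rw [sub_mul, mul_add, mul_add, hc]
      abel
    have := h i
    rw [e] at this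
    exact sub_eq_zero.mp this
  have ha2 : ∀ i, a' i * a' i = d' * d' := fun i => Subtype.ext (hsq i)
  have key0 : QQ d' n (∑ i, a' i) = 0 := comm_main n d' a' ha2
  have hsum : ((∑ i, a' i : S) : A) = ∑ i, a i := by
    simp [ha']
  have hfun : ((fun k : ℤ => (∑ i : Fin n, a i) - ((n : ℤ) - 2 * k) • D)
        ∘ (fun k : ℕ => (k : ℤ)))
      = S.subtype ∘ fun k : ℕ => ((∑ i, a' i) - (((n : ℤ) - 2 * (k : ℤ) : ℤ) : S) * d') := by
    funext k
    simp only [Function.comp, map_sub, map_mul, map_intCast, Subring.coe_subtype,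
      hsum, zsmul_eq_mul]
    rfl
  rw [hfun, ← List.map_map, ← map_list_prod (S.subtype)]
  have h0 : ((List.range (n + 1)).map
      (fun k : ℕ => (∑ i, a' i) - (((n : ℤ) - 2 * (k : ℤ) : ℤ) : S) * d')).prod = 0 := key0
  rw [h0, map_zero]
end

section
/- For natural numbers N, m with m ≤ N, the sum over k ≥ 0 of the quantities dim(λ_{m+k, m-k}) := ((2k+1)/(m+k+1))·C(N, m+k)·C(N+1, m−k) equals C(N, m)², where terms with m+k > N or m−k < 0 are zero. -/
/-- For `m ≤ N`, the sum over `k ≥ 0` of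
`dim(λ_{m+k, m-k}) = ((2k+1)/(m+k+1)) C(N, m+k) C(N+1, m−k)` equals `C(N, m)²`;
terms with `m - k < 0` are zero (so the sum ranges over `k ≤ m`) and terms with
`m + k > N` vanish since then `C(N, m+k) = 0`. Stated over `ℚ`. -/
theorem stmt18 (N m : ℕ) (hm : m ≤ N) :
    (∑ k ∈ Finset.range (m + 1),
        ((2 * (k : ℚ) + 1) / ((m : ℚ) + k + 1)) * (N.choose (m + k)) *
          ((N + 1).choose (m - k))) = (N.choose m : ℚ) ^ 2 := by
  set g : ℕ → ℚ := fun k => if k ≤ m then (N.choose (m+k) : ℚ) * N.choose (m-k) else 0 with hg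
  have hsum : ∀ k ∈ Finset.range (m+1),
      ((2 * (k : ℚ) + 1) / ((m : ℚ) + k + 1)) * (N.choose (m + k)) *
          ((N + 1).choose (m - k)) = g k - g (k+1) := by
    intro k hk
    rw [Finset.mem_range] at hk
    have hkm : k ≤ m := Nat.lt_succ_iff.mp hk
    have hden : ((m : ℚ) + k + 1) ≠ 0 := by positivity
    rcases eq_or_lt_of_le hkm with rfl | hlt
    · -- k = m
      simp only [hg, if_pos (le_refl k), if_neg (Nat.not_succ_le_self k),
        Nat.sub_self, Nat.choose_zero_right, Nat.cast_one]
      field_simp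
      ring
    · -- k < m
      have hgk : g k = (N.choose (m+k) : ℚ) * N.choose (m-k) := if_pos hkm
      have e1 : m + (k+1) = m + k + 1 := by omega
      have e2 : m - (k+1) = m - k - 1 := by omega
      have hgk1 : g (k+1) = (N.choose (m+k+1) : ℚ) * N.choose (m-k-1) := by
        simp only [hg]
        rw [if_pos (show k+1 ≤ m from hlt), e1, e2]
      rw [hgk, hgk1, div_mul_eq_mul_div, div_mul_eq_mul_div, div_eq_iff hden]
      -- Pascal: (N+1).choose (m-k) = N.choose (m-k-1) + N.choose (m-k)
      have hmk : m - k = (m - k - 1) + 1 := by omega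
      have hsub : m - k - 1 + 1 = m - k := by omega
      have pascal : ((N+1).choose (m-k) : ℚ) = N.choose (m-k-1) + N.choose (m-k) := by
        have hp := Nat.choose_succ_succ N (m-k-1)
        simp only [Nat.succ_eq_add_one] at hp
        rw [hsub] at hp
        exact_mod_cast hp
      by_cases hN : m + k ≤ N
      · have F1 : (N.choose (m+k+1) : ℚ) * ((m:ℚ)+k+1) = N.choose (m+k) * ((N:ℚ) - m - k) := by
          have := Nat.choose_succ_right_eq N (m+k)
          have h' : ((N.choose (m+k+1) : ℚ)) * ((m+k+1 : ℕ) : ℚ) = (N.choose (m+k) : ℚ) * ((N - (m+k) : ℕ) : ℚ) := by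
            exact_mod_cast congrArg (Nat.cast : ℕ → ℚ) this
          rw [Nat.cast_sub hN] at h'
          push_cast at h' ⊢
          linarith [h']
        have F2 : (N.choose (m-k) : ℚ) * ((m:ℚ) - k) = N.choose (m-k-1) * ((N:ℚ) - m + k + 1) := by
          have hthis := Nat.choose_succ_right_eq N (m-k-1)
          rw [hsub] at hthis
          have h' : (N.choose (m-k) : ℚ) * ((m-k : ℕ) : ℚ) = (N.choose (m-k-1) : ℚ) * ((N - (m-k-1) : ℕ) : ℚ) := by
            exact_mod_cast hthis
          have h1 : ((m-k : ℕ) : ℚ) = (m:ℚ) - k := Nat.cast_sub hkm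
          have h2 : ((N - (m-k-1) : ℕ) : ℚ) = (N:ℚ) - m + k + 1 := by
            rw [Nat.cast_sub (by omega : m - k - 1 ≤ N), ← e2, Nat.cast_sub (by omega : k + 1 ≤ m)]
            push_cast
            ring
          rw [h1, h2] at h'
          exact h'
        rw [pascal]
        linear_combination (N.choose (m-k-1) : ℚ) * F1 - (N.choose (m+k) : ℚ) * F2
      · have h1 : N.choose (m+k) = 0 := Nat.choose_eq_zero_of_lt (by omega)
        have h2 : N.choose (m+k+1) = 0 := Nat.choose_eq_zero_of_lt (by omega)
        rw [h1, h2]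
        push_cast
        ring
  rw [Finset.sum_congr rfl hsum, Finset.sum_range_sub' g (m+1)]
  have h0 : g 0 = (N.choose m : ℚ) ^ 2 := by
    simp [hg, sq]
  have h1 : g (m+1) = 0 := by
    simp [hg, Nat.not_succ_le_self]
  rw [h0, h1, sub_zero]
end

section
/- For every natural number N, ∑_{p=0}^{N} ∑_{q=0}^{p} ((p−q+1)/(p+1))·C(N,p)·C(N+1,q) = C(2N+1, N). -/
open Finset

/-- complementary partial sums of binomial coefficients -/
private lemma lemL (M m : ℕ) (h : m ≤ M) :
    ∑ q ∈ range (m + 1), M.choose q + ∑ q ∈ range (M - m), M.choose q = 2 ^ M := by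
  have h1 : ∑ q ∈ range (M + 1), M.choose q = 2 ^ M := Nat.sum_range_choose M
  have h2 : ∑ i ∈ range (M - m), M.choose (m + 1 + i) = ∑ i ∈ range (M - m), M.choose i := by
    rw [← Finset.sum_range_reflect (fun i => M.choose (m + 1 + i))]
    apply Finset.sum_congr rfl
    intro i hi
    simp only [mem_range] at hi
    have e : m + 1 + (M - m - 1 - i) = M - i := by omega
    rw [e, Nat.choose_symm (by omega)]
  calc ∑ q ∈ range (m + 1), M.choose q + ∑ q ∈ range (M - m), M.choose q
      = ∑ q ∈ range (m + 1), M.choose q + ∑ q ∈ Ico (m + 1) (M + 1), M.choose q := by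
        rw [Finset.sum_Ico_eq_sum_range]
        congr 1
        · rw [← h2]; apply Finset.sum_congr (by congr 1; omega) (fun i _ => by ring_nf)
    _ = 2 ^ M := by rw [Finset.sum_range_add_sum_Ico _ (by omega : m + 1 ≤ M + 1)]; exact h1

private lemma hA (N : ℕ) :
    2 * ∑ p ∈ range (N + 1), N.choose p * ∑ q ∈ range (p + 1), (N + 1).choose q
      = 2 ^ (2 * N + 1) := by
  set f : ℕ → ℕ := fun p => N.choose p * ∑ q ∈ range (p + 1), (N + 1).choose q with hf
  have hrefl : ∑ p ∈ range (N + 1), f p = ∑ p ∈ range (N + 1), f (N - p) := by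
    have := Finset.sum_range_reflect f (N + 1)
    simpa using this.symm
  have step : ∀ p ∈ range (N + 1), f p + f (N - p) = N.choose p * 2 ^ (N + 1) := by
    intro p hp
    simp only [mem_range] at hp
    have hp' : p ≤ N := by omega
    have hsymm : N.choose (N - p) = N.choose p := Nat.choose_symm hp'
    have hL := lemL (N + 1) p (by omega)
    have e : N + 1 - p = N - p + 1 := by omega
    rw [e] at hL
    simp only [hf, hsymm]
    rw [← Nat.mul_add, hL]
  calc 2 * ∑ p ∈ range (N + 1), f p
      = ∑ p ∈ range (N + 1), f p + ∑ p ∈ range (N + 1), f (N - p) := by rw [← hrefl]; ring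
    _ = ∑ p ∈ range (N + 1), (f p + f (N - p)) := (Finset.sum_add_distrib).symm
    _ = ∑ p ∈ range (N + 1), N.choose p * 2 ^ (N + 1) := Finset.sum_congr rfl step
    _ = (∑ p ∈ range (N + 1), N.choose p) * 2 ^ (N + 1) := by rw [Finset.sum_mul]
    _ = 2 ^ N * 2 ^ (N + 1) := by rw [Nat.sum_range_choose]
    _ = 2 ^ (2 * N + 1) := by rw [← pow_add]; congr 1; omega

private lemma hBE (N : ℕ) :
    (∑ a ∈ range (N + 2), (N + 1).choose a * ∑ q ∈ range (a - 1), N.choose q)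
    + (∑ a ∈ range (N + 2), (N + 1).choose a * ∑ q ∈ range (a + 1), N.choose q)
      = 2 ^ (2 * N + 1) := by
  set g : ℕ → ℕ := fun a => (N + 1).choose a * ∑ q ∈ range (a - 1), N.choose q with hg
  have hrefl : ∑ a ∈ range (N + 2), g a = ∑ a ∈ range (N + 2), g (N + 1 - a) := by
    have := Finset.sum_range_reflect g (N + 2)
    simpa using this.symm
  rw [hrefl, ← Finset.sum_add_distrib]
  have step : ∀ a ∈ range (N + 2),
      g (N + 1 - a) + (N + 1).choose a * ∑ q ∈ range (a + 1), N.choose q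
        = (N + 1).choose a * 2 ^ N := by
    intro a ha
    simp only [mem_range] at ha
    have ha' : a ≤ N + 1 := by omega
    have hsymm : (N + 1).choose (N + 1 - a) = (N + 1).choose a := Nat.choose_symm ha'
    have e : N + 1 - a - 1 = N - a := by omega
    simp only [hg, hsymm, e]
    rw [← Nat.mul_add]
    congr 1
    rcases Nat.lt_or_ge a (N + 1) with hlt | hge
    · have := lemL N a (by omega)
      omega
    · have haa : a = N + 1 := by omega
      subst haa
      have : ∑ q ∈ range (N + 1 + 1), N.choose q
          = ∑ q ∈ range (N + 1), N.choose q + N.choose (N + 1) := Finset.sum_range_succ _ _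
      rw [Nat.choose_eq_zero_of_lt (by omega)] at this
      have h0 : N - (N + 1) = 0 := by omega
      rw [h0]
      simp [this, Nat.sum_range_choose]
  rw [Finset.sum_congr rfl step, ← Finset.sum_mul, Nat.sum_range_choose, ← pow_add]
  congr 1; omega

private lemma sumSq (n : ℕ) :
    ∑ a ∈ range (n + 1), n.choose a * n.choose a = (n + n).choose n := by
  rw [Nat.add_choose_eq, Finset.Nat.sum_antidiagonal_eq_sum_range_succ_mk]
  apply Finset.sum_congr rfl
  intro a ha
  simp only [mem_range] at ha
  rw [Nat.choose_symm (by omega)]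

private lemma hEB (N : ℕ) :
    (∑ a ∈ range (N + 2), (N + 1).choose a * ∑ q ∈ range (a + 1), N.choose q)
      = (∑ a ∈ range (N + 2), (N + 1).choose a * ∑ q ∈ range (a - 1), N.choose q)
        + (2 * N + 2).choose (N + 1) := by
  have key : ∀ a : ℕ, ∑ q ∈ range (a + 1), N.choose q
      = ∑ q ∈ range (a - 1), N.choose q + (N + 1).choose a := by
    intro a
    rcases Nat.eq_zero_or_pos a with h0 | hpos
    · subst h0; simp
    · obtain ⟨b, rfl⟩ : ∃ b, a = b + 1 := ⟨a - 1, by omega⟩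
      have e : b + 1 - 1 = b := by omega
      rw [e, Finset.sum_range_succ, Finset.sum_range_succ, Nat.choose_succ_succ']
      omega
  have : ∑ a ∈ range (N + 2), (N + 1).choose a * ∑ q ∈ range (a + 1), N.choose q
      = ∑ a ∈ range (N + 2), ((N + 1).choose a * ∑ q ∈ range (a - 1), N.choose q
          + (N + 1).choose a * (N + 1).choose a) := by
    apply Finset.sum_congr rfl
    intro a _
    rw [key a, Nat.mul_add]
  rw [this, Finset.sum_add_distrib, sumSq]
  congr 1
  congr 1
  omega

private lemma twoC (N : ℕ) : (2 * N + 2).choose (N + 1) = 2 * (2 * N + 1).choose N := by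
  have h1 : (2 * N + 1 + 1).choose (N + 1)
      = (2 * N + 1).choose N + (2 * N + 1).choose (N + 1) := Nat.choose_succ_succ' _ _
  have h2 : (2 * N + 1).choose (2 * N + 1 - (N + 1)) = (2 * N + 1).choose (N + 1) :=
    Nat.choose_symm (by omega)
  have e : 2 * N + 1 - (N + 1) = N := by omega
  rw [e] at h2
  have e2 : 2 * N + 2 = 2 * N + 1 + 1 := by omega
  rw [e2, h1]
  omega

private lemma innerSum (N p : ℕ) :
    ∑ q ∈ range (p + 1),
        (((p : ℚ) - q + 1) / ((p : ℚ) + 1)) * (N.choose p) * ((N + 1).choose q)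
      = (N.choose p : ℚ) * ((∑ q ∈ range (p + 1), (N + 1).choose q : ℕ) : ℚ)
        - ((N + 1).choose (p + 1) : ℚ) * ((∑ q ∈ range p, N.choose q : ℕ) : ℚ) := by
  have hp1 : ((p : ℚ) + 1) ≠ 0 := by positivity
  have split : ∀ q ∈ range (p + 1),
      (((p : ℚ) - q + 1) / ((p : ℚ) + 1)) * (N.choose p) * ((N + 1).choose q)
        = (N.choose p : ℚ) * ((N + 1).choose q)
          - ((N.choose p : ℚ) / ((p : ℚ) + 1)) * ((q : ℚ) * ((N + 1).choose q)) := by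
    intro q _
    field_simp
    ring
  rw [Finset.sum_congr rfl split, Finset.sum_sub_distrib, ← Finset.mul_sum, ← Finset.mul_sum]
  have hqsum : ∑ q ∈ range (p + 1), (q : ℚ) * ((N + 1).choose q)
      = ((N : ℚ) + 1) * ((∑ q ∈ range p, N.choose q : ℕ) : ℚ) := by
    rw [Finset.sum_range_succ' (fun q => (q : ℚ) * ((N + 1).choose q))]
    simp only [Nat.cast_zero, zero_mul, add_zero]
    push_cast
    rw [Finset.mul_sum]
    apply Finset.sum_congr rfl
    intro q _
    have := Nat.add_one_mul_choose_eq N q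
    have hq : ((N + 1 : ℕ) : ℚ) * ((N.choose q : ℕ) : ℚ)
        = (((N + 1).choose (q + 1) : ℕ) : ℚ) * ((q + 1 : ℕ) : ℚ) := by
      rw [← Nat.cast_mul, ← Nat.cast_mul]
      exact_mod_cast congrArg (Nat.cast (R := ℚ)) this
    push_cast at hq ⊢
    linarith [hq]
  rw [hqsum]
  have hch : ((N.choose p : ℕ) : ℚ) / ((p : ℚ) + 1) * (((N : ℚ) + 1))
      = (((N + 1).choose (p + 1) : ℕ) : ℚ) := by
    have := Nat.add_one_mul_choose_eq N p
    have hq : ((N : ℚ) + 1) * (N.choose p : ℚ)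
        = ((N + 1).choose (p + 1) : ℚ) * ((p : ℚ) + 1) := by
      exact_mod_cast congrArg (Nat.cast (R := ℚ)) this
    field_simp
    linarith [hq]
  rw [← mul_assoc, hch]
  push_cast
  ring

/-- `∑_{p=0}^{N} ∑_{q=0}^{p} ((p−q+1)/(p+1)) C(N,p) C(N+1,q) = C(2N+1, N)`,
stated over `ℚ`. -/
theorem stmt19 (N : ℕ) :
    (∑ p ∈ Finset.range (N + 1), ∑ q ∈ Finset.range (p + 1),
        (((p : ℚ) - q + 1) / ((p : ℚ) + 1)) * (N.choose p) * ((N + 1).choose q)) =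
      ((2 * N + 1).choose N : ℚ) := by
  have hrw : (∑ p ∈ Finset.range (N + 1), ∑ q ∈ Finset.range (p + 1),
        (((p : ℚ) - q + 1) / ((p : ℚ) + 1)) * (N.choose p) * ((N + 1).choose q))
      = ((∑ p ∈ range (N + 1), N.choose p * ∑ q ∈ range (p + 1), (N + 1).choose q : ℕ) : ℚ)
        - ((∑ a ∈ range (N + 2), (N + 1).choose a * ∑ q ∈ range (a - 1), N.choose q : ℕ) : ℚ) := by
    rw [Finset.sum_congr rfl (fun p _ => innerSum N p), Finset.sum_sub_distrib]
    have hB : (∑ a ∈ range (N + 2), (N + 1).choose a * ∑ q ∈ range (a - 1), N.choose q)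
        = ∑ p ∈ range (N + 1), (N + 1).choose (p + 1) * ∑ q ∈ range p, N.choose q := by
      rw [Finset.sum_range_succ' (fun a => (N + 1).choose a * ∑ q ∈ range (a - 1), N.choose q)]
      simp
    rw [hB]
    push_cast
    rfl
  rw [hrw]
  have h1 := hA N
  have h2 := hBE N
  have h3 := hEB N
  have h4 := twoC N
  set a := ∑ p ∈ range (N + 1), N.choose p * ∑ q ∈ range (p + 1), (N + 1).choose q
  set b := ∑ x ∈ range (N + 2), (N + 1).choose x * ∑ q ∈ range (x - 1), N.choose q
  have hab : a = b + (2 * N + 1).choose N := by omega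
  rw [hab]
  push_cast
  ring
end
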